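/- arXiv:1911.00993 — 2 statements merged into one kernel-verified Lean document; each statement's English description precedes it below -/
import Mathlib

section
/- Let r : ℂ² → ℝ be a smooth function, K ∈ ℝ, T : ℂ² → ℝ smooth, and set h = 1 + K·r + T and p = 1 + T, ρ = r·h. Then at any point of the zero set {r = 0}, the determinant of the 2×2 complex Hessian of ρ satisfies 𝓗_ρ = 2K·h·𝓛_r + 𝓗_{p·r}, where 𝓛_r = r_{z z̄}|r_w|² + r_{w w̄}|r_z|² − 2Re(r_{z w̄} r_w r_{z̄}) is the Levi form of r applied to the tangent vector ⟨r_w, −r_z⟩, and 𝓗_f = f_{z z̄} f_{w w̄} − |f_{z w̄}|² denotes the determinant of the complex Hessian of f. -/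
open Complex

noncomputable section

/-- Complexification of a real-valued function on `ℂ × ℂ`. -/
def cx (r : ℂ × ℂ → ℝ) : ℂ × ℂ → ℂ := fun p => (r p : ℂ)

/-- Wirtinger derivative `∂f/∂z` (first coordinate). -/
def dz (f : ℂ × ℂ → ℂ) (p : ℂ × ℂ) : ℂ :=
  (1 / 2) * (fderiv ℝ f p (1, 0) - Complex.I * fderiv ℝ f p (Complex.I, 0))

/-- Wirtinger derivative `∂f/∂z̄` (first coordinate). -/
def dzbar (f : ℂ × ℂ → ℂ) (p : ℂ × ℂ) : ℂ :=
  (1 / 2) * (fderiv ℝ f p (1, 0) + Complex.I * fderiv ℝ f p (Complex.I, 0))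

/-- Wirtinger derivative `∂f/∂w` (second coordinate). -/
def dw (f : ℂ × ℂ → ℂ) (p : ℂ × ℂ) : ℂ :=
  (1 / 2) * (fderiv ℝ f p (0, 1) - Complex.I * fderiv ℝ f p (0, Complex.I))

/-- Wirtinger derivative `∂f/∂w̄` (second coordinate). -/
def dwbar (f : ℂ × ℂ → ℂ) (p : ℂ × ℂ) : ℂ :=
  (1 / 2) * (fderiv ℝ f p (0, 1) + Complex.I * fderiv ℝ f p (0, Complex.I))

/-- `r_{z z̄}` for a real-valued `r`. -/
def rzz (r : ℂ × ℂ → ℝ) (p : ℂ × ℂ) : ℝ := (dz (fun q => dzbar (cx r) q) p).re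

/-- `r_{w w̄}` for a real-valued `r`. -/
def rww (r : ℂ × ℂ → ℝ) (p : ℂ × ℂ) : ℝ := (dw (fun q => dwbar (cx r) q) p).re

/-- `r_{z w̄}` for a real-valued `r`. -/
def rzw (r : ℂ × ℂ → ℝ) (p : ℂ × ℂ) : ℂ := dz (fun q => dwbar (cx r) q) p

/-- The Levi form of `r` applied to the complex tangent vector `⟨r_w, -r_z⟩`:
`𝓛_r = r_{z z̄}|r_w|² + r_{w w̄}|r_z|² − 2 Re (r_{z w̄} r_w r_{z̄})`. -/
def Levi (r : ℂ × ℂ → ℝ) (p : ℂ × ℂ) : ℝ :=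
  rzz r p * ‖dw (cx r) p‖ ^ 2 +
  rww r p * ‖dz (cx r) p‖ ^ 2 -
  2 * (rzw r p * dw (cx r) p * dzbar (cx r) p).re

/-- Determinant of the complex Hessian: `𝓗_f = f_{z z̄} f_{w w̄} − |f_{z w̄}|²`. -/
def Hdet (r : ℂ × ℂ → ℝ) (p : ℂ × ℂ) : ℝ :=
  rzz r p * rww r p - ‖rzw r p‖ ^ 2

/-- The complex Hessian of the real-valued function `ρ` is positive semidefinite at `p`,
as a Hermitian form on `ℂ²`. -/
def PSDHessian (ρ : ℂ × ℂ → ℝ) (p : ℂ × ℂ) : Prop :=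
  ∀ ξ₁ ξ₂ : ℂ,
    0 ≤ rzz ρ p * ‖ξ₁‖ ^ 2 +
        2 * (rzw ρ p * ξ₁ * (starRingEnd ℂ) ξ₂).re +
        rww ρ p * ‖ξ₂‖ ^ 2

end


noncomputable section WirtingerAux
open Complex

/-- generic Wirtinger-type operator -/
def Wd (a b : ℂ × ℂ) (s : ℂ) (f : ℂ × ℂ → ℂ) (p : ℂ × ℂ) : ℂ :=
  (1 / 2) * (fderiv ℝ f p a + s * fderiv ℝ f p b)

lemma dz_eq (f : ℂ × ℂ → ℂ) (p : ℂ × ℂ) :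
    dz f p = Wd (1,0) (Complex.I,0) (-Complex.I) f p := by
  simp only [dz, Wd, neg_mul]; ring

lemma dzbar_eq (f : ℂ × ℂ → ℂ) (p : ℂ × ℂ) :
    dzbar f p = Wd (1,0) (Complex.I,0) Complex.I f p := rfl

lemma dw_eq (f : ℂ × ℂ → ℂ) (p : ℂ × ℂ) :
    dw f p = Wd (0,1) (0,Complex.I) (-Complex.I) f p := by
  simp only [dw, Wd, neg_mul]; ring

lemma dwbar_eq (f : ℂ × ℂ → ℂ) (p : ℂ × ℂ) :
    dwbar f p = Wd (0,1) (0,Complex.I) Complex.I f p := rfl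

lemma wd_smooth {f : ℂ × ℂ → ℂ} (hf : ContDiff ℝ (⊤ : ℕ∞) f) (a b : ℂ × ℂ) (s : ℂ) :
    ContDiff ℝ (⊤ : ℕ∞) (Wd a b s f) :=
  contDiff_const.mul
    (((ContinuousLinearMap.apply ℝ ℂ a).contDiff.comp (hf.fderiv_right (by simp))).add
      (contDiff_const.mul
        ((ContinuousLinearMap.apply ℝ ℂ b).contDiff.comp (hf.fderiv_right (by simp)))))

lemma wd_add {f g : ℂ × ℂ → ℂ} {p : ℂ × ℂ}
    (hf : DifferentiableAt ℝ f p) (hg : DifferentiableAt ℝ g p) (a b : ℂ × ℂ) (s : ℂ) :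
    Wd a b s (fun x => f x + g x) p = Wd a b s f p + Wd a b s g p := by
  simp only [Wd, fderiv_fun_add hf hg, ContinuousLinearMap.add_apply]; ring

lemma wd_mul {f g : ℂ × ℂ → ℂ} {p : ℂ × ℂ}
    (hf : DifferentiableAt ℝ f p) (hg : DifferentiableAt ℝ g p) (a b : ℂ × ℂ) (s : ℂ) :
    Wd a b s (fun x => f x * g x) p = Wd a b s f p * g p + f p * Wd a b s g p := by
  simp only [Wd, fderiv_fun_mul hf hg, ContinuousLinearMap.add_apply,
    ContinuousLinearMap.smul_apply, smul_eq_mul]; ring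

lemma wd_const {p : ℂ × ℂ} (c : ℂ) (a b : ℂ × ℂ) (s : ℂ) :
    Wd a b s (fun _ => c) p = 0 := by
  simp [Wd, fderiv_const]

lemma wd_const_mul {f : ℂ × ℂ → ℂ} {p : ℂ × ℂ}
    (hf : DifferentiableAt ℝ f p) (c : ℂ) (a b : ℂ × ℂ) (s : ℂ) :
    Wd a b s (fun x => c * f x) p = c * Wd a b s f p := by
  simp only [Wd, fderiv_const_mul hf c, ContinuousLinearMap.smul_apply, smul_eq_mul]; ring

lemma wd_wd_mul {f g : ℂ × ℂ → ℂ} (hf : ContDiff ℝ (⊤ : ℕ∞) f) (hg : ContDiff ℝ (⊤ : ℕ∞) g)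
    (a b a' b' : ℂ × ℂ) (s s' : ℂ) (q : ℂ × ℂ) :
    Wd a b s (fun x => Wd a' b' s' (fun y => f y * g y) x) q =
      Wd a b s (Wd a' b' s' f) q * g q + Wd a' b' s' f q * Wd a b s g q +
      Wd a b s f q * Wd a' b' s' g q + f q * Wd a b s (Wd a' b' s' g) q := by
  have h1 : (fun x => Wd a' b' s' (fun y => f y * g y) x) =
      fun x => Wd a' b' s' f x * g x + f x * Wd a' b' s' g x := by
    funext x
    exact wd_mul (hf.differentiable (by simp) x) (hg.differentiable (by simp) x) a' b' s'
  rw [h1]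
  have d1 : DifferentiableAt ℝ (fun x => Wd a' b' s' f x * g x) q :=
    ((wd_smooth hf a' b' s').differentiable (by simp) q).mul (hg.differentiable (by simp) q)
  have d2 : DifferentiableAt ℝ (fun x => f x * Wd a' b' s' g x) q :=
    (hf.differentiable (by simp) q).mul ((wd_smooth hg a' b' s').differentiable (by simp) q)
  rw [wd_add d1 d2 a b s,
    wd_mul ((wd_smooth hf a' b' s').differentiable (by simp) q) (hg.differentiable (by simp) q) a b s,
    wd_mul (hf.differentiable (by simp) q) ((wd_smooth hg a' b' s').differentiable (by simp) q) a b s]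
  ring

lemma cx_smooth {r : ℂ × ℂ → ℝ} (hr : ContDiff ℝ (⊤ : ℕ∞) r) : ContDiff ℝ (⊤ : ℕ∞) (cx r) :=
  Complex.ofRealCLM.contDiff.comp hr

lemma fderiv_cx {r : ℂ × ℂ → ℝ} (hr : Differentiable ℝ r) (p v : ℂ × ℂ) :
    fderiv ℝ (cx r) p v = ((fderiv ℝ r p v : ℝ) : ℂ) := by
  have h : cx r = ⇑Complex.ofRealCLM ∘ r := rfl
  rw [h, fderiv_comp p Complex.ofRealCLM.differentiableAt (hr p)]
  simp

lemma wd_conj {r : ℂ × ℂ → ℝ} (hr : ContDiff ℝ (⊤ : ℕ∞) r) (a b : ℂ × ℂ) (q : ℂ × ℂ) :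
    (starRingEnd ℂ) (Wd a b (-Complex.I) (cx r) q) = Wd a b Complex.I (cx r) q := by
  simp only [Wd, fderiv_cx (hr.differentiable (by simp)), map_mul, map_add, map_neg,
    map_div₀, map_one, map_ofNat, Complex.conj_ofReal, Complex.conj_I]
  ring

end WirtingerAux

section WirtingerAux2
open Complex

/-- Wirtinger derivative of an affine combination. -/
lemma wd_affine {f g : ℂ × ℂ → ℂ} {p : ℂ × ℂ} (hf : DifferentiableAt ℝ f p)
    (hg : DifferentiableAt ℝ g p) (c d : ℂ) (a b : ℂ × ℂ) (s : ℂ) :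
    Wd a b s (fun x => c + d * f x + g x) p = d * Wd a b s f p + Wd a b s g p := by
  have h : HasFDerivAt (fun x => c + d * f x + g x)
      ((d • fderiv ℝ f p) + fderiv ℝ g p) p := by
    simpa using ((hasFDerivAt_const c p).fun_add (hf.hasFDerivAt.const_mul d)).fun_add hg.hasFDerivAt
  simp only [Wd, h.fderiv, ContinuousLinearMap.add_apply, ContinuousLinearMap.smul_apply,
    smul_eq_mul]
  ring

end WirtingerAux2

set_option maxHeartbeats 4000000 in
/-- Proposition: at any point of `{r = 0}`,
`𝓗_{(1+Kr+T)r} = 2K h 𝓛_r + 𝓗_{(1+T)r}` where `h = 1 + Kr + T`. -/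
theorem hessian_det_decomposition (r T : ℂ × ℂ → ℝ) (K : ℝ)
    (hr : ContDiff ℝ (⊤ : ℕ∞) r) (hT : ContDiff ℝ (⊤ : ℕ∞) T)
    (q : ℂ × ℂ) (hq : r q = 0) :
    Hdet (fun p => r p * (1 + K * r p + T p)) q =
      2 * K * (1 + K * r q + T q) * Levi r q +
        Hdet (fun p => (1 + T p) * r p) q := by
  have hR : ContDiff ℝ (⊤ : ℕ∞) (cx r) := cx_smooth hr
  have hS : ContDiff ℝ (⊤ : ℕ∞) (cx T) := cx_smooth hT
  have hRd : DifferentiableAt ℝ (cx r) q := (hR.differentiable (by simp)) q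
  have hSd : DifferentiableAt ℝ (cx T) q := (hS.differentiable (by simp)) q
  have hRq : cx r q = 0 := by simp [cx, hq]
  have hH : ContDiff ℝ (⊤ : ℕ∞) (fun x => 1 + (K : ℂ) * cx r x + cx T x) :=
    (contDiff_const.add (contDiff_const.mul hR)).add hS
  have hP : ContDiff ℝ (⊤ : ℕ∞) (fun x => 1 + (0 : ℂ) * cx r x + cx T x) :=
    (contDiff_const.add (contDiff_const.mul hR)).add hS
  have hρ : cx (fun p => r p * (1 + K * r p + T p)) =
      fun x => cx r x * (1 + (K : ℂ) * cx r x + cx T x) := by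
    funext x; simp only [cx]; push_cast; ring
  have hg2 : cx (fun p => (1 + T p) * r p) =
      fun x => (1 + (0 : ℂ) * cx r x + cx T x) * cx r x := by
    funext x; simp only [cx]; push_cast; ring
  have hWdH : ∀ (a b : ℂ × ℂ) (s : ℂ),
      Wd a b s (fun x => 1 + (K : ℂ) * cx r x + cx T x) q
        = (K : ℂ) * Wd a b s (cx r) q + Wd a b s (cx T) q := fun a b s =>
    wd_affine hRd hSd 1 _ a b s
  have hWdP : ∀ (a b : ℂ × ℂ) (s : ℂ),
      Wd a b s (fun x => 1 + (0 : ℂ) * cx r x + cx T x) q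
        = (0 : ℂ) * Wd a b s (cx r) q + Wd a b s (cx T) q := fun a b s =>
    wd_affine hRd hSd 1 _ a b s
  simp only [Hdet, Levi, rzz, rww, rzw, dz_eq, dzbar_eq, dw_eq, dwbar_eq, hρ, hg2, hq]
  rw [wd_wd_mul hR hH _ _ _ _ _ _ q, wd_wd_mul hR hH _ _ _ _ _ _ q,
      wd_wd_mul hR hH _ _ _ _ _ _ q, wd_wd_mul hP hR _ _ _ _ _ _ q,
      wd_wd_mul hP hR _ _ _ _ _ _ q, wd_wd_mul hP hR _ _ _ _ _ _ q]
  simp only [hWdH, hWdP, hRq, ← wd_conj hr (q := q), ← wd_conj hT (q := q)]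
  simp only [cx]
  simp only [Complex.sq_norm, Complex.normSq_apply, Complex.add_re, Complex.add_im,
    Complex.mul_re, Complex.mul_im, Complex.sub_re, Complex.sub_im, Complex.one_re,
    Complex.one_im, Complex.ofReal_re, Complex.ofReal_im, Complex.conj_re, Complex.conj_im,
    Complex.zero_re, Complex.zero_im, Complex.ofReal_zero, zero_mul, mul_zero, add_zero,
    zero_add, sub_zero, zero_sub, neg_zero, mul_one, one_mul]
  ring
end

section
/- Let r(z,w) = Im w + |z|⁴ + 100|z|⁶ + 4(Re z)(Re w) − 8(Re w)² (the case A = 8). Then there is no constant C > 0 and no neighborhood U of the origin such that |r_z|² ≤ C·𝓛_r on U. Specifically, along the real curve γ(t) = (z,w) with Im z = 0, Re z = t, Im w = 0, Re w = t/4, the Levi form 𝓛_r vanishes to order 4 in t while |r_z|² vanishes to order 2 in t (|r_z|² = (t²/4 + O(t³))·4 ≥ c·t² for small t ≠ 0, and 𝓛_r(γ(t)) = O(t⁴)). -/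
/-!
Along the real curve `t ↦ (t, t/4)` the derivative `r_w = -i/2` is purely imaginary while
`r_z = r_{z̄} = t/2 + 2t³ + 300t⁵` is real, so the mixed term of the Levi form drops out and,
with `r_{zz̄} = 4|z|² + 900|z|⁴` and `r_{ww̄} = -A/2 = -4`, one gets `𝓛 = r_{zz̄}/4 - 4|r_z|²`.
The quadratic terms `t²` and `4 (t/2)²` cancel exactly because `A = 8`, so `𝓛 = O(t⁴)`, whereas
`|r_z|² ≥ t²/4`; a bound `|r_z|² ≤ C 𝓛` near the origin would force `t² ≲ C t⁴` for small `t`.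
-/

open Complex

/-- The model defining function `r_A(z,w) = Im w + |z|⁴ + 100|z|⁶ + 4 Re z Re w − A (Re w)²`. -/
noncomputable def rA (A : ℝ) : ℂ × ℂ → ℝ := fun p =>
  p.2.im + ‖p.1‖ ^ 4 + 100 * ‖p.1‖ ^ 6 +
    4 * p.1.re * p.2.re - A * p.2.re ^ 2

open Filter Topology ComplexConjugate

lemma fderiv_ofReal_comp {E : Type*} [NormedAddCommGroup E] [NormedSpace ℝ E] {f : E → ℝ} {x : E}
    (hf : DifferentiableAt ℝ f x) :
    fderiv ℝ (fun y => (f y : ℂ)) x = ofRealCLM.comp (fderiv ℝ f x) :=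
  (ofRealCLM.hasFDerivAt.comp x hf.hasFDerivAt).fderiv

@[simp] lemma fderiv_re_fst (p v : ℂ × ℂ) : fderiv ℝ (fun q : ℂ × ℂ => q.1.re) p v = v.1.re :=
  congrArg (· v) (reCLM.comp (ContinuousLinearMap.fst ℝ ℂ ℂ)).fderiv

@[simp] lemma fderiv_im_fst (p v : ℂ × ℂ) : fderiv ℝ (fun q : ℂ × ℂ => q.1.im) p v = v.1.im :=
  congrArg (· v) (imCLM.comp (ContinuousLinearMap.fst ℝ ℂ ℂ)).fderiv

@[simp] lemma fderiv_re_snd (p v : ℂ × ℂ) : fderiv ℝ (fun q : ℂ × ℂ => q.2.re) p v = v.2.re :=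
  congrArg (· v) (reCLM.comp (ContinuousLinearMap.snd ℝ ℂ ℂ)).fderiv

@[simp] lemma fderiv_im_snd (p v : ℂ × ℂ) : fderiv ℝ (fun q : ℂ × ℂ => q.2.im) p v = v.2.im :=
  congrArg (· v) (imCLM.comp (ContinuousLinearMap.snd ℝ ℂ ℂ)).fderiv

lemma sq_norm_eq_re_sq_add_im_sq (z : ℂ) : ‖z‖ ^ 2 = z.re ^ 2 + z.im ^ 2 := by
  rw [Complex.sq_norm, Complex.normSq_apply]; ring

lemma norm_pow_four_eq_re_sq_add_im_sq_sq (z : ℂ) : ‖z‖ ^ 4 = (z.re ^ 2 + z.im ^ 2) ^ 2 := by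
  rw [← sq_norm_eq_re_sq_add_im_sq]; ring

lemma rA_eq (A : ℝ) : rA A = fun q => q.2.im + (q.1.re ^ 2 + q.1.im ^ 2) ^ 2 +
    100 * (q.1.re ^ 2 + q.1.im ^ 2) ^ 3 + 4 * q.1.re * q.2.re - A * q.2.re ^ 2 := by
  ext q
  simp only [rA, ← sq_norm_eq_re_sq_add_im_sq, ← pow_mul]

lemma differentiable_rA (A : ℝ) : Differentiable ℝ (rA A) := by
  rw [rA_eq]; fun_prop

lemma fderiv_rA_apply (A : ℝ) (p v : ℂ × ℂ) : fderiv ℝ (rA A) p v =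
    (4 * ‖p.1‖ ^ 2 + 600 * ‖p.1‖ ^ 4) * (p.1.re * v.1.re + p.1.im * v.1.im)
      + 4 * (p.2.re * v.1.re + p.1.re * v.2.re) - 2 * A * p.2.re * v.2.re + v.2.im := by
  rw [rA_eq, norm_pow_four_eq_re_sq_add_im_sq_sq, sq_norm_eq_re_sq_add_im_sq]
  simp (disch := fun_prop) [fderiv_fun_add, fderiv_fun_sub, fderiv_fun_mul, fderiv_fun_pow]
  ring

lemma fderiv_cx_apply {r : ℂ × ℂ → ℝ} {p : ℂ × ℂ} (hr : DifferentiableAt ℝ r p) (v : ℂ × ℂ) :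
    fderiv ℝ (cx r) p v = fderiv ℝ r p v := by
  unfold cx; rw [fderiv_ofReal_comp hr]; rfl

lemma dz_cx_rA (A : ℝ) (p : ℂ × ℂ) :
    dz (cx (rA A)) p = ((2 * ‖p.1‖ ^ 2 + 300 * ‖p.1‖ ^ 4 : ℝ) : ℂ) * conj p.1 + 2 * p.2.re := by
  simp only [dz, fderiv_cx_apply (differentiable_rA A _), fderiv_rA_apply]
  apply Complex.ext <;> simp <;> ring

lemma dzbar_cx_rA (A : ℝ) : dzbar (cx (rA A)) =
    fun p => ((2 * ‖p.1‖ ^ 2 + 300 * ‖p.1‖ ^ 4 : ℝ) : ℂ) * p.1 + 2 * p.2.re := by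
  ext1 p
  simp only [dzbar, fderiv_cx_apply (differentiable_rA A _), fderiv_rA_apply]
  apply Complex.ext <;> simp <;> ring

lemma dw_cx_rA (A : ℝ) (p : ℂ × ℂ) :
    dw (cx (rA A)) p = (2 * p.1.re - A * p.2.re : ℝ) - I / 2 := by
  simp only [dw, fderiv_cx_apply (differentiable_rA A _), fderiv_rA_apply]
  apply Complex.ext <;> simp
  ring

lemma dwbar_cx_rA (A : ℝ) : dwbar (cx (rA A)) =
    fun p => (2 * p.1.re - A * p.2.re : ℝ) + I / 2 := by
  ext1 p
  simp only [dwbar, fderiv_cx_apply (differentiable_rA A _), fderiv_rA_apply]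
  apply Complex.ext <;> simp
  ring

lemma rzz_rA (A : ℝ) (p : ℂ × ℂ) : rzz (rA A) p = 4 * ‖p.1‖ ^ 2 + 900 * ‖p.1‖ ^ 4 := by
  simp only [rzz, dzbar_cx_rA, dz, norm_pow_four_eq_re_sq_add_im_sq_sq, sq_norm_eq_re_sq_add_im_sq]
  simp (disch := fun_prop) only [fderiv_fun_add, fderiv_fun_mul, fderiv_ofReal_comp, fderiv_fun_pow,
    fderiv_fst]
  simp [-ofReal_pow]
  ring

lemma rww_rA (A : ℝ) (p : ℂ × ℂ) : rww (rA A) p = -A / 2 := by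
  simp (disch := fun_prop) only [rww, dwbar_cx_rA, dw, fderiv_add_const, fderiv_ofReal_comp,
    fderiv_fun_sub, fderiv_const_mul]
  simp
  ring

lemma rzw_rA (A : ℝ) (p : ℂ × ℂ) : rzw (rA A) p = 1 := by
  simp (disch := fun_prop) only [rzw, dwbar_cx_rA, dz, fderiv_add_const, fderiv_ofReal_comp,
    fderiv_fun_sub, fderiv_const_mul]
  simp

lemma dz_cx_rA_ofReal (A t s : ℝ) :
    dz (cx (rA A)) (t, s) = (2 * t ^ 3 + 300 * t ^ 5 + 2 * s : ℝ) := by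
  rw [dz_cx_rA, norm_pow_four_eq_re_sq_add_im_sq_sq, sq_norm_eq_re_sq_add_im_sq]
  simp
  ring

lemma dzbar_cx_rA_ofReal (A t s : ℝ) :
    dzbar (cx (rA A)) (t, s) = (2 * t ^ 3 + 300 * t ^ 5 + 2 * s : ℝ) := by
  simp only [dzbar_cx_rA, norm_pow_four_eq_re_sq_add_im_sq_sq, sq_norm_eq_re_sq_add_im_sq]
  simp
  ring

lemma Levi_rA_ofReal (A t s : ℝ) : Levi (rA A) (t, s) =
    (4 * t ^ 2 + 900 * t ^ 4) * ((2 * t - A * s) ^ 2 + 1 / 4)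
      - A / 2 * (2 * t ^ 3 + 300 * t ^ 5 + 2 * s) ^ 2
      - 2 * (2 * t ^ 3 + 300 * t ^ 5 + 2 * s) * (2 * t - A * s) := by
  rw [Levi, rzz_rA, rww_rA, rzw_rA, dw_cx_rA, dz_cx_rA_ofReal, dzbar_cx_rA_ofReal]
  simp only [norm_pow_four_eq_re_sq_add_im_sq_sq, sq_norm_eq_re_sq_add_im_sq]
  simp [-ofReal_pow]
  ring

lemma norm_dz_cx_rA_eight_sq (t : ℝ) :
    ‖dz (cx (rA 8)) (t, (t / 4 : ℝ))‖ ^ 2 = (t / 2 + 2 * t ^ 3 + 300 * t ^ 5) ^ 2 := by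
  rw [dz_cx_rA_ofReal, norm_real, Real.norm_eq_abs, sq_abs]
  ring

lemma Levi_rA_eight (t : ℝ) : Levi (rA 8) (t, (t / 4 : ℝ)) =
    t ^ 4 * (217 - 1216 * t ^ 2 - 4800 * t ^ 4 - 360000 * t ^ 6) := by
  rw [Levi_rA_ofReal]
  ring

lemma rA_eight_curve_bounds {t : ℝ} (ht : |t| < 1) :
    400000⁻¹ * t ^ 2 ≤ ‖dz (cx (rA 8)) (t, (t / 4 : ℝ))‖ ^ 2 ∧
      |Levi (rA 8) (t, (t / 4 : ℝ))| ≤ 400000 * t ^ 4 := by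
  have hu : t ^ 2 ≤ 1 := ((sq_lt_one_iff_abs_lt_one t).mpr ht).le
  have hu0 : 0 ≤ t ^ 2 := sq_nonneg t
  rw [norm_dz_cx_rA_eight_sq, Levi_rA_eight]
  constructor
  · calc 400000⁻¹ * t ^ 2 ≤ t ^ 2 * (1 / 2) ^ 2 := by nlinarith
      _ ≤ t ^ 2 * (1 / 2 + 2 * t ^ 2 + 300 * t ^ 4) ^ 2 := by
        gcongr
        nlinarith [pow_nonneg hu0 2]
      _ = (t / 2 + 2 * t ^ 3 + 300 * t ^ 5) ^ 2 := by ring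
  · rw [abs_mul, abs_of_nonneg (by positivity), mul_comm]
    gcongr
    -- `400000 > 217 + 1216 + 4800 + 360000`, the sum of the coefficients
    have h4 : t ^ 4 ≤ 1 := by nlinarith
    have h6 : t ^ 6 ≤ 1 := by nlinarith
    rw [abs_le]
    constructor <;> nlinarith [pow_nonneg hu0 2, pow_nonneg hu0 3]

lemma not_eventually_le_const_mul_of_sq_le_of_abs_le_pow_four {f g : ℝ → ℝ} {c δ C : ℝ}
    (hc : 0 < c) (hδ : 0 < δ) (hC : 0 < C)
    (h : ∀ t, |t| < δ → t ≠ 0 → c * t ^ 2 ≤ f t ∧ |g t| ≤ c⁻¹ * t ^ 4) :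
    ¬ ∀ᶠ t in 𝓝[≠] 0, f t ≤ C * g t := by
  intro hdom
  have hsmall : ∀ᶠ t in 𝓝 (0 : ℝ), |t| < δ ∧ C * t ^ 2 < c ^ 2 :=
    ((continuous_abs.tendsto' 0 0 abs_zero).eventually_lt_const hδ).and
      (((by fun_prop : Continuous fun t : ℝ => C * t ^ 2).tendsto' 0 0 (by simp)).eventually_lt_const
        (by positivity))
  obtain ⟨t, ⟨hδt, hCt⟩, hne : t ≠ 0, hle⟩ :=
    ((hsmall.filter_mono nhdsWithin_le_nhds).and (eventually_mem_nhdsWithin.and hdom)).exists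
  obtain ⟨hf, hg⟩ := h t hδt hne
  have ht2 : 0 < t ^ 2 := by positivity
  have hsq : c ^ 2 * t ^ 2 ≤ C * t ^ 2 * t ^ 2 :=
    calc c ^ 2 * t ^ 2 = c * (c * t ^ 2) := by ring
      _ ≤ c * (C * (c⁻¹ * t ^ 4)) := mul_le_mul_of_nonneg_left
        (hf.trans (hle.trans (mul_le_mul_of_nonneg_left ((le_abs_self _).trans hg) hC.le))) hc.le
      _ = C * t ^ 2 * t ^ 2 := by field_simp
  exact hCt.not_ge (le_of_mul_le_mul_right hsq ht2)

/-- For `A = 8`, `|r_z|²` is not dominated by any constant multiple of the Levi form on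
any neighborhood of the origin: along the curve `t ↦ (t, t/4)` the Levi form vanishes
to order 4 while `|r_z|²` vanishes only to order 2. -/
theorem no_levi_domination :
    (¬ ∃ C > (0 : ℝ), ∃ U ∈ nhds (0 : ℂ × ℂ), ∀ p ∈ U,
        ‖dz (cx (rA 8)) p‖ ^ 2 ≤ C * Levi (rA 8) p) ∧
    ∃ c > (0 : ℝ), ∃ δ > (0 : ℝ), ∀ t : ℝ, |t| < δ → t ≠ 0 →
      c * t ^ 2 ≤ ‖dz (cx (rA 8)) ((t : ℂ), ((t / 4 : ℝ) : ℂ))‖ ^ 2 ∧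
      |Levi (rA 8) ((t : ℂ), ((t / 4 : ℝ) : ℂ))| ≤ c⁻¹ * t ^ 4 := by
  have hcurve : ∃ c > (0 : ℝ), ∃ δ > (0 : ℝ), ∀ t : ℝ, |t| < δ → t ≠ 0 →
      c * t ^ 2 ≤ ‖dz (cx (rA 8)) ((t : ℂ), ((t / 4 : ℝ) : ℂ))‖ ^ 2 ∧
      |Levi (rA 8) ((t : ℂ), ((t / 4 : ℝ) : ℂ))| ≤ c⁻¹ * t ^ 4 :=
    ⟨400000⁻¹, by norm_num, 1, one_pos, fun t ht _ => by
      simpa only [inv_inv] using rA_eight_curve_bounds ht⟩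
  refine ⟨?_, hcurve⟩
  rintro ⟨C, hC, U, hU, hdom⟩
  obtain ⟨c, hc, δ, hδ, hbounds⟩ := hcurve
  have hγ : Tendsto (fun t : ℝ => ((t : ℂ), ((t / 4 : ℝ) : ℂ))) (𝓝[≠] 0) (𝓝 0) :=
    ((by fun_prop : Continuous fun t : ℝ => ((t : ℂ), ((t / 4 : ℝ) : ℂ))).tendsto' 0 0
      (by simp)).mono_left nhdsWithin_le_nhds
  exact not_eventually_le_const_mul_of_sq_le_of_abs_le_pow_four hc hδ hC hbounds
    ((hγ.eventually_mem hU).mono fun t ht => hdom _ ht)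
end
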